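/- A function α : G^3 → A satisfying α(x,y,z) = xy·α(y^{-1}, yz, (xyz)^{-1}) = -α(x, yz, z^{-1}) = -α(xy, y^{-1}, yz) for all x,y,z ∈ G also satisfies α(x,y,z) = α(xy, z, (yz)^{-1}). -/
import Mathlib

/-- A function `α : G³ → A` satisfying the symmetry identities
`α(x,y,z) = xy•α(y⁻¹, yz, (xyz)⁻¹) = -α(x, yz, z⁻¹) = -α(xy, y⁻¹, yz)`
also satisfies `α(x,y,z) = α(xy, z, (yz)⁻¹)`. -/
theorem symmetry_implies_shift {G A : Type} [Group G] [AddCommGroup A] [DistribMulAction G A]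
    (α : G → G → G → A)
    (h1 : ∀ x y z : G, α x y z = (x * y) • α y⁻¹ (y * z) (x * y * z)⁻¹)
    (h2 : ∀ x y z : G, α x y z = -α x (y * z) z⁻¹)
    (h3 : ∀ x y z : G, α x y z = -α (x * y) y⁻¹ (y * z)) :
    ∀ x y z : G, α x y z = α (x * y) z (y * z)⁻¹ := by
  intro x y z
  rw [h3 x y z, h2 (x * y) y⁻¹ (y * z), neg_neg, inv_mul_cancel_left]
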